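/- arXiv:2512.08342 — 2 statements merged into one kernel-verified Lean document; each statement's English description precedes it below -/
import Mathlib

section
/- Let h : Fin n → Fin n → Fin n → Fin n → ℝ be a four-index array that is fully symmetric in its first three indices (i.e., invariant under all permutations of i, j, k in h i j k l). Then (1/16) * ∑_{i,j,k,l} (h i j k l + h j k l i + h k l i j + h l i j k)^2 = (1/4) * ∑_{i,j,k,l} (h i j k l)^2 + (3/4) * ∑_{i,j,k,l} (h i j k l) * (h i j l k). -/
/-!
Write `u = h + ρh + ρ²h + ρ³h`, where `ρ` shifts the four indices cyclically. The pairing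
`⟪f, g⟫ = ∑ f_{ijkl} g_{ijkl}` is `ρ`-invariant and `ρ⁴ = 1`, so
`⟪u, u⟫ = 4⟪h, h⟫ + 8⟪h, ρh⟫ + 4⟪h, ρ²h⟫`. Using the symmetry of `h` in its first three slots,
both `⟪h, ρh⟫` and `⟪h, ρ²h⟫` become `∑ h_{ijkl} h_{ijlk}` after relabelling the summation indices.
-/

open Finset

namespace FourTensor

variable {α R : Type*}

def rotate (f : α → α → α → α → R) : α → α → α → α → R :=
  fun i j k l => f j k l i

def swap₃₄ (f : α → α → α → α → R) : α → α → α → α → R :=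
  fun i j k l => f i j l k

theorem rotate_rotate_rotate_rotate (f : α → α → α → α → R) :
    rotate (rotate (rotate (rotate f))) = f :=
  rfl

section Reindex

variable [Fintype α] [AddCommMonoid R] (f : α → α → α → α → R)

theorem sum_swap₁₂ :
    ∑ i, ∑ j, ∑ k, ∑ l, f j i k l = ∑ i, ∑ j, ∑ k, ∑ l, f i j k l :=
  sum_comm

theorem sum_swap₂₃ :
    ∑ i, ∑ j, ∑ k, ∑ l, f i k j l = ∑ i, ∑ j, ∑ k, ∑ l, f i j k l :=
  sum_congr rfl fun _ _ => sum_comm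

theorem sum_swap₃₄ :
    ∑ i, ∑ j, ∑ k, ∑ l, f i j l k = ∑ i, ∑ j, ∑ k, ∑ l, f i j k l :=
  sum_congr rfl fun _ _ => sum_congr rfl fun _ _ => sum_comm

theorem sum_rotate :
    ∑ i, ∑ j, ∑ k, ∑ l, f j k l i = ∑ i, ∑ j, ∑ k, ∑ l, f i j k l :=
  (sum_swap₁₂ fun i j k l => f j k l i).symm.trans <|
    (sum_swap₂₃ fun i j k l => f i k l j).symm.trans <|
      (sum_swap₃₄ fun i j k l => f i j l k).symm

end Reindex

section TensorDot

variable [Fintype α] [CommSemiring R]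

def tensorDot (f g : α → α → α → α → R) : R :=
  ∑ i, ∑ j, ∑ k, ∑ l, f i j k l * g i j k l

variable (f g k : α → α → α → α → R)

theorem tensorDot_comm : tensorDot f g = tensorDot g f := by
  simp only [tensorDot, mul_comm]

theorem tensorDot_add_left : tensorDot (f + g) k = tensorDot f k + tensorDot g k := by
  simp only [tensorDot, Pi.add_apply, add_mul, sum_add_distrib]

theorem tensorDot_add_right : tensorDot f (g + k) = tensorDot f g + tensorDot f k := by
  simp only [tensorDot, Pi.add_apply, mul_add, sum_add_distrib]

theorem tensorDot_self : tensorDot f f = ∑ i, ∑ j, ∑ k, ∑ l, f i j k l ^ 2 := by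
  simp only [tensorDot, sq]

theorem tensorDot_rotate_rotate : tensorDot (rotate f) (rotate g) = tensorDot f g :=
  sum_rotate fun i j k l => f i j k l * g i j k l

theorem tensorDot_rotate_left :
    tensorDot (rotate f) g = tensorDot f (rotate (rotate (rotate g))) := by
  rw [← tensorDot_rotate_rotate f]
  rfl

theorem tensorDot_rotate_rotate_rotate :
    tensorDot f (rotate (rotate (rotate f))) = tensorDot f (rotate f) := by
  rw [← tensorDot_rotate_rotate, rotate_rotate_rotate_rotate, tensorDot_comm]

theorem tensorDot_cyclicSum_self :
    tensorDot (f + rotate f + rotate (rotate f) + rotate (rotate (rotate f)))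
        (f + rotate f + rotate (rotate f) + rotate (rotate (rotate f)))
      = 4 * tensorDot f f + 8 * tensorDot f (rotate f)
        + 4 * tensorDot f (rotate (rotate f)) := by
  simp only [tensorDot_add_left, tensorDot_add_right, tensorDot_rotate_left,
    rotate_rotate_rotate_rotate, tensorDot_rotate_rotate_rotate]
  ring

variable {f}

theorem tensorDot_rotate_eq_swap₃₄ (hcyc : ∀ i j k l, f j k i l = f i j k l) :
    tensorDot f (rotate f) = tensorDot f (swap₃₄ f) := by
  let F : α → α → α → α → R := fun i j k l => f i j k l * f i j l k
  calc tensorDot f (rotate f) = ∑ i, ∑ j, ∑ k, ∑ l, F j k i l := by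
        unfold tensorDot rotate
        congr! 4 with i - j - k - l -
        rw [← hcyc i j k l]
    _ = ∑ i, ∑ j, ∑ k, ∑ l, F i k j l := (sum_swap₁₂ fun i j k l => F j k i l).symm
    _ = tensorDot f (swap₃₄ f) := sum_swap₂₃ F

theorem tensorDot_rotate_rotate_eq_swap₃₄ (hcyc : ∀ i j k l, f j k i l = f i j k l)
    (hswap : ∀ i j k l, f i k j l = f i j k l) :
    tensorDot f (rotate (rotate f)) = tensorDot f (swap₃₄ f) := by
  let F : α → α → α → α → R := fun i j k l => f i j k l * f i j l k
  calc tensorDot f (rotate (rotate f)) = ∑ i, ∑ j, ∑ k, ∑ l, F i k j l := by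
        unfold tensorDot rotate
        congr! 4 with i - j - k - l -
        rw [← hswap i j k l, hcyc i k l j]
    _ = tensorDot f (swap₃₄ f) := sum_swap₂₃ F

theorem sum_sq_cyclicSum (hcyc : ∀ i j k l, f j k i l = f i j k l)
    (hswap : ∀ i j k l, f i k j l = f i j k l) :
    ∑ i, ∑ j, ∑ k, ∑ l, (f i j k l + f j k l i + f k l i j + f l i j k) ^ 2
      = 4 * ∑ i, ∑ j, ∑ k, ∑ l, f i j k l ^ 2
        + 12 * ∑ i, ∑ j, ∑ k, ∑ l, f i j k l * f i j l k := by
  have h := tensorDot_cyclicSum_self f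
  rw [tensorDot_rotate_eq_swap₃₄ hcyc, tensorDot_rotate_rotate_eq_swap₃₄ hcyc hswap,
    tensorDot_self, tensorDot_self] at h
  refine h.trans ?_
  simp only [tensorDot, swap₃₄]
  ring

end TensorDot

end FourTensor

theorem stmt_0 (n : ℕ) (h : Fin n → Fin n → Fin n → Fin n → ℝ)
    (hsym : ∀ (σ : Equiv.Perm (Fin 3)) (v : Fin 3 → Fin n) (l : Fin n),
      h (v (σ 0)) (v (σ 1)) (v (σ 2)) l = h (v 0) (v 1) (v 2) l) :
    (1/16 : ℝ) * ∑ i, ∑ j, ∑ k, ∑ l,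
        (h i j k l + h j k l i + h k l i j + h l i j k)^2
      = (1/4) * ∑ i, ∑ j, ∑ k, ∑ l, (h i j k l)^2
        + (3/4) * ∑ i, ∑ j, ∑ k, ∑ l, h i j k l * h i j l k := by
  have hcyc : ∀ i j k l, h j k i l = h i j k l := fun i j k l =>
    hsym (finRotate 3) ![i, j, k] l
  have hswap : ∀ i j k l, h i k j l = h i j k l := fun i j k l =>
    hsym (Equiv.swap 1 2) ![i, j, k] l
  rw [FourTensor.sum_sq_cyclicSum hcyc hswap]
  ring
end

section
/- Let n ≥ 1, let λ : Fin n → ℝ, and let h : Fin n → Fin n → Fin n → ℝ be totally symmetric in its three indices. Then ∑_{i,j,k} ((λ i)^2 + 2 * (λ i) * (λ j)) * (h i j k)^2 = (1/3) * ∑_{i,j,k} ((λ i + λ j + λ k) * (h i j k))^2. In particular, A + 2B ≥ 0, where A = ∑_{i,j,k} (λ i)^2 (h i j k)^2 and B = ∑_{i,j,k} (λ i)(λ j)(h i j k)^2. -/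
theorem stmt_3 (n : ℕ) (hn : 1 ≤ n) (lam : Fin n → ℝ) (h : Fin n → Fin n → Fin n → ℝ)
    (hsym : ∀ i j k, h i j k = h j i k ∧ h i j k = h i k j) :
    (∑ i, ∑ j, ∑ k, ((lam i)^2 + 2 * lam i * lam j) * (h i j k)^2
      = (1/3) * ∑ i, ∑ j, ∑ k, ((lam i + lam j + lam k) * h i j k)^2)
    ∧ (∑ i, ∑ j, ∑ k, (lam i)^2 * (h i j k)^2)
        + 2 * (∑ i, ∑ j, ∑ k, lam i * lam j * (h i j k)^2) ≥ 0 := by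
  set g : Fin n → Fin n → Fin n → ℝ := fun i j k => (h i j k)^2 with hg
  have g12 : ∀ i j k, g j i k = g i j k := fun i j k => by
    simp only [hg]; rw [← (hsym i j k).1]
  have g23 : ∀ i j k, g i k j = g i j k := fun i j k => by
    simp only [hg]; rw [← (hsym i j k).2]
  have g13 : ∀ i j k, g k j i = g i j k := fun i j k =>
    ((g23 k j i).symm.trans (g12 i k j)).trans (g23 i j k)
  have swap12 : ∀ F : Fin n → Fin n → Fin n → ℝ,
      ∑ i, ∑ j, ∑ k, F i j k = ∑ i, ∑ j, ∑ k, F j i k := fun F => Finset.sum_comm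
  have swap23 : ∀ F : Fin n → Fin n → Fin n → ℝ,
      ∑ i, ∑ j, ∑ k, F i j k = ∑ i, ∑ j, ∑ k, F i k j :=
    fun F => Finset.sum_congr rfl (fun i _ => Finset.sum_comm)
  have cyc : ∀ F : Fin n → Fin n → Fin n → ℝ,
      ∑ i, ∑ j, ∑ k, F i j k = ∑ i, ∑ j, ∑ k, F k i j := fun F => by
    rw [swap12 F]; exact swap23 (fun i j k => F j i k)
  have swap13 : ∀ F : Fin n → Fin n → Fin n → ℝ,
      ∑ i, ∑ j, ∑ k, F i j k = ∑ i, ∑ j, ∑ k, F k j i := fun F => by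
    rw [cyc F]; exact swap12 (fun i j k => F k i j)
  have mulsum : ∀ (c : ℝ) (F : Fin n → Fin n → Fin n → ℝ),
      ∑ i, ∑ j, ∑ k, c * F i j k = c * ∑ i, ∑ j, ∑ k, F i j k := by
    intro c F; simp [Finset.mul_sum]
  have e1 : ∑ i, ∑ j, ∑ k, (lam j)^2 * g i j k = ∑ i, ∑ j, ∑ k, (lam i)^2 * g i j k := by
    rw [swap12 (fun i j k => (lam j)^2 * g i j k)]
    simp only [g12]
  have e2 : ∑ i, ∑ j, ∑ k, (lam k)^2 * g i j k = ∑ i, ∑ j, ∑ k, (lam i)^2 * g i j k := by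
    rw [swap13 (fun i j k => (lam k)^2 * g i j k)]
    simp only [g13]
  have e3 : ∑ i, ∑ j, ∑ k, lam i * lam k * g i j k = ∑ i, ∑ j, ∑ k, lam i * lam j * g i j k := by
    rw [swap23 (fun i j k => lam i * lam k * g i j k)]
    simp only [g23]
  have e4 : ∑ i, ∑ j, ∑ k, lam j * lam k * g i j k = ∑ i, ∑ j, ∑ k, lam i * lam j * g i j k := by
    rw [cyc (fun i j k => lam j * lam k * g i j k)]
    simp only [g12, g23]
  have expand : ∑ i, ∑ j, ∑ k, ((lam i + lam j + lam k) * h i j k)^2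
      = 3 * (∑ i, ∑ j, ∑ k, (lam i)^2 * g i j k)
        + 6 * (∑ i, ∑ j, ∑ k, lam i * lam j * g i j k) := by
    have : ∀ i j k : Fin n, ((lam i + lam j + lam k) * h i j k)^2
        = (lam i)^2 * g i j k + (lam j)^2 * g i j k + (lam k)^2 * g i j k
          + 2 * (lam i * lam j * g i j k) + 2 * (lam i * lam k * g i j k)
          + 2 * (lam j * lam k * g i j k) := by
      intro i j k; simp only [hg]; ring
    simp only [this, Finset.sum_add_distrib]
    rw [mulsum 2 (fun i j k => lam i * lam j * g i j k),
        mulsum 2 (fun i j k => lam i * lam k * g i j k),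
        mulsum 2 (fun i j k => lam j * lam k * g i j k), e1, e2, e3, e4]
    ring
  have lhs : ∑ i, ∑ j, ∑ k, ((lam i)^2 + 2 * lam i * lam j) * (h i j k)^2
      = (∑ i, ∑ j, ∑ k, (lam i)^2 * g i j k)
        + 2 * (∑ i, ∑ j, ∑ k, lam i * lam j * g i j k) := by
    have : ∀ i j k : Fin n, ((lam i)^2 + 2 * lam i * lam j) * (h i j k)^2
        = (lam i)^2 * g i j k + 2 * (lam i * lam j * g i j k) := by
      intro i j k; simp only [hg]; ring
    simp only [this, Finset.sum_add_distrib]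
    rw [mulsum 2 (fun i j k => lam i * lam j * g i j k)]
  have sqnn : (0:ℝ) ≤ ∑ i, ∑ j, ∑ k, ((lam i + lam j + lam k) * h i j k)^2 := by
    apply Finset.sum_nonneg; intro i _
    apply Finset.sum_nonneg; intro j _
    apply Finset.sum_nonneg; intro k _
    positivity
  constructor
  · rw [lhs, expand]; ring
  · have : (∑ i, ∑ j, ∑ k, (lam i)^2 * (h i j k)^2)
        + 2 * (∑ i, ∑ j, ∑ k, lam i * lam j * (h i j k)^2)
      = (1/3) * ∑ i, ∑ j, ∑ k, ((lam i + lam j + lam k) * h i j k)^2 := by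
      rw [expand]; simp only [hg]; ring
    rw [this]; linarith
end
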